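/- arXiv:1205.2152 — 3 statements merged into one kernel-verified Lean document; each statement's English description precedes it below -/
import Mathlib

section
/- Let G = (P, W) be a simple game with dual game G* = (P, {X ⊆ P : P \ X ∉ W}). Then G is roughly weighted if and only if G* is roughly weighted. -/
/-! With the same weights, the quota `w(P) - q` witnesses rough weightedness of the dual game:
`w(X) = w(P) - w(Xᶜ)`, so `X` lies strictly below (above) the new quota exactly when `Xᶜ` lies
strictly above (below) `q`. Duality is an involution, which gives the converse. -/

/-- A simple game `W` on the finite player set `ι` is roughly weighted if there exist
nonnegative weights and a quota, not all zero, such that coalitions strictly below the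
quota are losing and coalitions strictly above the quota are winning. -/
def RoughlyWeighted {ι : Type*} [Fintype ι] (W : Set (Finset ι)) : Prop :=
  ∃ (w : ι → ℝ) (q : ℝ), (∀ i, 0 ≤ w i) ∧ ¬(q = 0 ∧ ∀ i, w i = 0) ∧
    ∀ X : Finset ι, ((∑ i ∈ X, w i) < q → X ∉ W) ∧ (q < (∑ i ∈ X, w i) → X ∈ W)

section

variable {ι : Type*} [Fintype ι] [DecidableEq ι]

def dualGame (W : Set (Finset ι)) : Set (Finset ι) := {X | Xᶜ ∉ W}

@[simp]
lemma dualGame_dualGame (W : Set (Finset ι)) : dualGame (dualGame W) = W := by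
  ext X
  simp [dualGame]

lemma RoughlyWeighted.dualGame {W : Set (Finset ι)} (h : RoughlyWeighted W) :
    RoughlyWeighted (dualGame W) := by
  obtain ⟨w, q, hw, hnt, hW⟩ := h
  refine ⟨w, (∑ i, w i) - q, hw, ?_, fun X => ?_⟩
  · rintro ⟨hq, hw0⟩
    have htotal : ∑ i, w i = 0 := by simp [hw0]
    exact hnt ⟨by linarith, hw0⟩
  · have hsplit : ∑ i ∈ X, w i + ∑ i ∈ Xᶜ, w i = ∑ i, w i := Finset.sum_add_sum_compl X w
    exact ⟨fun hlt hX => hX ((hW Xᶜ).2 (by linarith)), fun hgt => (hW Xᶜ).1 (by linarith)⟩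

end

theorem stmt_10_general {ι : Type*} [Fintype ι] [DecidableEq ι] (W : Set (Finset ι)) :
    RoughlyWeighted W ↔ RoughlyWeighted {X : Finset ι | Xᶜ ∉ W} :=
  ⟨RoughlyWeighted.dualGame, fun h => dualGame_dualGame W ▸ h.dualGame⟩

theorem stmt_10 {ι : Type*} [Fintype ι] [DecidableEq ι] (W : Set (Finset ι))
    (hmono : ∀ X Y : Finset ι, X ∈ W → X ⊆ Y → Y ∈ W) :
    RoughlyWeighted W ↔ RoughlyWeighted {X : Finset ι | Xᶜ ∉ W} :=
  stmt_10_general W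
end

section
/- Let G = (P, W) be a roughly weighted simple game with rough voting representation [q; w], and let A ⊆ P. Then the reduced game G^A on P \ A, whose winning coalitions are {X ⊆ P \ A : X ∪ A ∈ W}, is roughly weighted with representation [max(0, q - w(A)); w restricted to P \ A], provided some player in P \ A has positive weight. -/
/-! For `X` disjoint from `A` we have `w(X ∪ A) = w(X) + w(A)`, so comparing `w(X)` with
`q - w(A)` is the same as comparing `w(X ∪ A)` with `q`, and the representation of `G` decides
whether `X ∪ A` wins. Truncating the quota at `0` is harmless: it only matters when
`q ≤ w(A)`, and then no coalition has weight below the new quota `0`. A player of `P \ A`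
with positive weight keeps the new representation nonzero. -/

open Finset

lemma add_lt_of_lt_max_zero_sub {s q a : ℝ} (hs : 0 ≤ s) (h : s < max 0 (q - a)) :
    s + a < q := by
  rcases lt_max_iff.mp h with h | h <;> linarith

lemma lt_add_of_max_zero_sub_lt {s q a : ℝ} (h : max 0 (q - a) < s) : q < s + a := by
  linarith [le_max_right 0 (q - a)]

lemma sum_union_of_subset_compl {ι M : Type*} [Fintype ι] [DecidableEq ι] [AddCommMonoid M]
    (w : ι → M) {A X : Finset ι} (hX : X ⊆ Aᶜ) :
    ∑ i ∈ X ∪ A, w i = ∑ i ∈ X, w i + ∑ i ∈ A, w i :=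
  sum_union (disjoint_compl_left.mono_left hX)

theorem stmt_12_general {ι : Type*} [Fintype ι] [DecidableEq ι] (W : Set (Finset ι))
    (w : ι → ℝ) (q : ℝ) (hw : ∀ i, 0 ≤ w i)
    (hrep : ∀ X : Finset ι, ((∑ i ∈ X, w i) < q → X ∉ W) ∧ (q < (∑ i ∈ X, w i) → X ∈ W))
    (A : Finset ι) (hb : ∃ b ∈ Aᶜ, 0 < w b) :
    ¬(max 0 (q - ∑ i ∈ A, w i) = 0 ∧ ∀ i ∈ Aᶜ, w i = 0) ∧
    ∀ X : Finset ι, X ⊆ Aᶜ →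
      (((∑ i ∈ X, w i) < max 0 (q - ∑ i ∈ A, w i) →
          X ∉ {Y : Finset ι | Y ⊆ Aᶜ ∧ Y ∪ A ∈ W}) ∧
       (max 0 (q - ∑ i ∈ A, w i) < (∑ i ∈ X, w i) →
          X ∈ {Y : Finset ι | Y ⊆ Aᶜ ∧ Y ∪ A ∈ W})) := by
  obtain ⟨b, hbA, hbpos⟩ := hb
  refine ⟨fun h => hbpos.ne' (h.2 b hbA), fun X hX => ⟨fun hlt hwin => ?_, fun hlt => ⟨hX, ?_⟩⟩⟩
  · refine (hrep (X ∪ A)).1 ?_ hwin.2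
    rw [sum_union_of_subset_compl w hX]
    exact add_lt_of_lt_max_zero_sub (sum_nonneg fun i _ => hw i) hlt
  · refine (hrep (X ∪ A)).2 ?_
    rw [sum_union_of_subset_compl w hX]
    exact lt_add_of_max_zero_sub_lt hlt

theorem stmt_12 {ι : Type*} [Fintype ι] [DecidableEq ι] (W : Set (Finset ι))
    (hmono : ∀ X Y : Finset ι, X ∈ W → X ⊆ Y → Y ∈ W)
    (w : ι → ℝ) (q : ℝ) (hw : ∀ i, 0 ≤ w i)
    (hnz : ¬(q = 0 ∧ ∀ i, w i = 0))
    (hrep : ∀ X : Finset ι, ((∑ i ∈ X, w i) < q → X ∉ W) ∧ (q < (∑ i ∈ X, w i) → X ∈ W))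
    (A : Finset ι) (hb : ∃ b ∈ Aᶜ, 0 < w b) :
    ¬(max 0 (q - ∑ i ∈ A, w i) = 0 ∧ ∀ i ∈ Aᶜ, w i = 0) ∧
    ∀ X : Finset ι, X ⊆ Aᶜ →
      (((∑ i ∈ X, w i) < max 0 (q - ∑ i ∈ A, w i) →
          X ∉ {Y : Finset ι | Y ⊆ Aᶜ ∧ Y ∪ A ∈ W}) ∧
       (max 0 (q - ∑ i ∈ A, w i) < (∑ i ∈ X, w i) →
          X ∈ {Y : Finset ι | Y ⊆ Aᶜ ∧ Y ∪ A ∈ W})) :=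
  stmt_12_general W w q hw hrep A hb
end

section
/- Let G = (P, W) be a roughly weighted simple game with rough voting representation [q; w]. Define a new weight function u by u(i) = (1/|[i]|)·Σ_{j∈[i]} w(j), where [i] is the equivalence class of player i under the relation i ∼ j iff for all X ⊆ P with i,j ∉ X, X ∪ {i} ∈ W ⟺ X ∪ {j} ∈ W. Then [q; u] is also a rough voting representation of G, and u is constant on each equivalence class. -/
/-!
Interchangeability of players is an equivalence relation, and whether a coalition wins depends
only on how many players it has in each class: equivalent players can be swapped one at a time.
Given `X`, take a coalition `Y` of minimal `w`-weight among those with the same class counts.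
No swap of a member of `Y` for an equivalent outsider lowers its weight, and summing these
exchange inequalities over pairs of equivalent players gives `w(Y) ≤ u(Y) = u(X)`. So if
`u(X) < q` then `Y`, hence `X`, is losing; the winning case is the same with maximal weight.
-/

open scoped Classical

open Finset

section Interchangeable

variable {ι : Type*} [DecidableEq ι] (W : Set (Finset ι))

def Interchangeable (i j : ι) : Prop :=
  ∀ X : Finset ι, i ∉ X → j ∉ X → (insert i X ∈ W ↔ insert j X ∈ W)

variable {W}

theorem Interchangeable.refl (i : ι) : Interchangeable W i i := fun _ _ _ => Iff.rfl

theorem Interchangeable.symm {i j : ι} (h : Interchangeable W i j) : Interchangeable W j i :=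
  fun X hj hi => (h X hi hj).symm

-- When `j ∈ X`, route through `X.erase j ∪ {i, k}`, swapping `j ↔ k` and then `i ↔ j`.
theorem Interchangeable.trans {i j k : ι} (hij : Interchangeable W i j)
    (hjk : Interchangeable W j k) : Interchangeable W i k := by
  intro X hi hk
  by_cases hj : j ∈ X
  swap
  · exact (hij X hi hj).trans (hjk X hj hk)
  obtain rfl | hik := eq_or_ne i k
  · rfl
  obtain ⟨Z, hjZ, rfl⟩ : ∃ Z, j ∉ Z ∧ X = insert j Z :=
    ⟨X.erase j, notMem_erase j X, (insert_erase hj).symm⟩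
  simp only [mem_insert, not_or] at hi hk
  calc insert i (insert j Z) ∈ W ↔ insert j (insert i Z) ∈ W := by rw [insert_comm]
    _ ↔ insert k (insert i Z) ∈ W := hjk _ (by simp [hjZ, Ne.symm hi.1]) (by simp [hik.symm, hk.2])
    _ ↔ insert i (insert k Z) ∈ W := by rw [insert_comm]
    _ ↔ insert j (insert k Z) ∈ W := hij _ (by simp [hik, hi.2]) (by simp [hjZ, Ne.symm hk.1])
    _ ↔ insert k (insert j Z) ∈ W := by rw [insert_comm]

variable (W) in
theorem interchangeable_equivalence : Equivalence (Interchangeable W) :=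
  ⟨Interchangeable.refl, Interchangeable.symm, Interchangeable.trans⟩

variable (W) in
def interchangeableSetoid : Setoid ι := ⟨Interchangeable W, interchangeable_equivalence W⟩

end Interchangeable

section ClassProfile

variable {ι : Type*} (s : Setoid ι)

def classProfile (X : Finset ι) : Multiset (Quotient s) := X.val.map (Quotient.mk s)

variable {s}

@[simp]
theorem classProfile_insert [DecidableEq ι] {a : ι} {X : Finset ι} (ha : a ∉ X) :
    classProfile s (insert a X) = Quotient.mk s a ::ₘ classProfile s X := by
  simp [classProfile, insert_val_of_notMem ha]

theorem classProfile_insert_erase [DecidableEq ι] {y z : ι} {Y : Finset ι} (hy : y ∈ Y)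
    (hz : z ∉ Y) (hyz : s y z) : classProfile s (insert z (Y.erase y)) = classProfile s Y := by
  conv_rhs => rw [← insert_erase hy]
  rw [classProfile_insert (fun h => hz (mem_of_mem_erase h)),
    classProfile_insert (notMem_erase y Y), Quotient.sound hyz]

theorem classProfile_sdiff_eq_of_classProfile_eq [DecidableEq ι] {X Y : Finset ι}
    (h : classProfile s X = classProfile s Y) :
    classProfile s (X \ Y) = classProfile s (Y \ X) := by
  have split (A B : Finset ι) :
      classProfile s A = classProfile s (A \ B) + classProfile s (A ∩ B) := by
    rw [classProfile, classProfile, classProfile, ← Multiset.map_add, ← filter_notMem_eq_sdiff,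
      ← filter_mem_eq_inter, filter_val, filter_val, add_comm, Multiset.filter_add_not]
  have := split X Y
  rw [h, split Y X, inter_comm] at this
  exact (add_right_cancel this).symm

theorem sum_eq_sum_of_classProfile_eq {M : Type*} [AddCommMonoid M] {f : ι → M}
    (hf : ∀ i j, s i j → f i = f j) {X Y : Finset ι} (h : classProfile s X = classProfile s Y) :
    ∑ i ∈ X, f i = ∑ i ∈ Y, f i := by
  have hlift (Z : Finset ι) :
      ∑ i ∈ Z, f i = ((classProfile s Z).map (Quotient.lift f hf)).sum := by
    rw [classProfile, Multiset.map_map]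
    rfl
  rw [hlift, hlift, h]

end ClassProfile

section Profile

variable {ι : Type*} [DecidableEq ι] {W : Set (Finset ι)} {s : Setoid ι}

theorem union_mem_iff_of_classProfile_eq (hs : ∀ i j, s i j → Interchangeable W i j)
    {A B : Finset ι} (hAB : Disjoint A B) (h : classProfile s A = classProfile s B)
    {Z : Finset ι} (hAZ : Disjoint A Z) (hBZ : Disjoint B Z) :
    (A ∪ Z ∈ W ↔ B ∪ Z ∈ W) := by
  induction A using Finset.induction_on generalizing B Z with
  | empty =>
    obtain rfl : B = ∅ := by
      simpa [classProfile, eq_comm] using congrArg Multiset.card h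
    rfl
  | insert a A haA ih =>
    rw [classProfile_insert haA] at h
    obtain ⟨b, hbB, hab⟩ : ∃ b ∈ B, Quotient.mk s b = Quotient.mk s a := by
      have : Quotient.mk s a ∈ classProfile s B := h ▸ Multiset.mem_cons_self _ _
      simpa [classProfile] using this
    have haB : a ∉ B := disjoint_left.1 hAB (mem_insert_self a A)
    have haZ : a ∉ Z := disjoint_left.1 hAZ (mem_insert_self a A)
    have hbZ : b ∉ Z := disjoint_left.1 hBZ hbB
    obtain ⟨B, hbB', rfl⟩ : ∃ B', b ∉ B' ∧ B = insert b B' :=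
      ⟨B.erase b, notMem_erase b B, (insert_erase hbB).symm⟩
    rw [classProfile_insert hbB', hab, Multiset.cons_inj_right] at h
    have haB' : a ∉ B := fun h => haB (mem_insert_of_mem h)
    have hswap := hs a b (Quotient.exact hab.symm) (B ∪ Z) (by simp [haB', haZ])
      (by simp [hbB', hbZ])
    calc insert a A ∪ Z ∈ W ↔ A ∪ insert a Z ∈ W := by rw [insert_union, union_insert]
      _ ↔ B ∪ insert a Z ∈ W :=
          ih ((disjoint_insert_left.1 hAB).2.mono_right (subset_insert b B)) h
            (disjoint_insert_right.2 ⟨haA, (disjoint_insert_left.1 hAZ).2⟩)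
            (disjoint_insert_right.2 ⟨haB', (disjoint_insert_left.1 hBZ).2⟩)
      _ ↔ insert b B ∪ Z ∈ W := by rw [union_insert, insert_union]; exact hswap

theorem mem_iff_of_classProfile_eq (hs : ∀ i j, s i j → Interchangeable W i j)
    {X Y : Finset ι} (h : classProfile s X = classProfile s Y) : X ∈ W ↔ Y ∈ W := by
  have key := union_mem_iff_of_classProfile_eq hs disjoint_sdiff_sdiff
    (classProfile_sdiff_eq_of_classProfile_eq h) (Z := X ∩ Y) (disjoint_sdiff_inter X Y)
    (inter_comm X Y ▸ disjoint_sdiff_inter Y X)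
  rwa [sdiff_union_inter, inter_comm, sdiff_union_inter] at key

end Profile

section ClassAverage

variable {ι : Type*} [Fintype ι] (s : Setoid ι)

noncomputable def classOf (i : ι) : Finset ι := univ.filter fun j => s i j

noncomputable def classAverage (w : ι → ℝ) (i : ι) : ℝ :=
  (∑ j ∈ classOf s i, w j) / (classOf s i).card

variable {s}

theorem mem_classOf {i j : ι} : j ∈ classOf s i ↔ s i j := by simp [classOf]

theorem self_mem_classOf (i : ι) : i ∈ classOf s i := mem_classOf.2 (s.refl' i)

theorem classOf_eq_of_rel {i j : ι} (h : s i j) : classOf s i = classOf s j := by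
  ext k
  simp only [mem_classOf]
  exact ⟨s.trans' (s.symm' h), s.trans' h⟩

theorem card_classOf_pos (i : ι) : (0 : ℝ) < (classOf s i).card := by
  exact_mod_cast card_pos.2 ⟨i, self_mem_classOf i⟩

theorem classAverage_eq_of_rel (w : ι → ℝ) {i j : ι} (h : s i j) :
    classAverage s w i = classAverage s w j := by
  rw [classAverage, classAverage, classOf_eq_of_rel h]

theorem classAverage_neg (w : ι → ℝ) (i : ι) :
    classAverage s (fun j => -w j) i = -classAverage s w i := by
  simp [classAverage, neg_div]

theorem classAverage_nonneg {w : ι → ℝ} (hw : ∀ i, 0 ≤ w i) (i : ι) : 0 ≤ classAverage s w i :=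
  div_nonneg (sum_nonneg fun j _ => hw j) (Nat.cast_nonneg _)

theorem eq_zero_of_classAverage_eq_zero {w : ι → ℝ} (hw : ∀ i, 0 ≤ w i) {i : ι}
    (h : classAverage s w i = 0) : w i = 0 := by
  rw [classAverage, div_eq_zero_iff, or_iff_left (card_classOf_pos i).ne'] at h
  exact (sum_eq_zero_iff_of_nonneg fun j _ => hw j).1 h i (self_mem_classOf i)

theorem classAverage_sub_eq_sum (w : ι → ℝ) (i : ι) :
    classAverage s w i - w i = ∑ j, if s i j then (w j - w i) / (classOf s i).card else 0 := by
  rw [← sum_filter]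
  change _ = ∑ j ∈ classOf s i, _
  rw [← sum_div, sum_sub_distrib, sum_const, nsmul_eq_mul, classAverage]
  field_simp [(card_classOf_pos i).ne']

-- The terms with both players in `Y` cancel in pairs; the others are nonnegative by hypothesis.
theorem sum_le_sum_classAverage {w : ι → ℝ} {Y : Finset ι}
    (h : ∀ y ∈ Y, ∀ z ∉ Y, s y z → w y ≤ w z) : ∑ y ∈ Y, w y ≤ ∑ y ∈ Y, classAverage s w y := by
  set g : ι → ι → ℝ := fun y z => if s y z then (w z - w y) / (classOf s y).card else 0
  have hg : ∀ y z, g z y = -g y z := by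
    intro y z
    by_cases hyz : s y z
    · simp only [g, hyz, s.symm' hyz, if_true, classOf_eq_of_rel hyz]
      ring
    · have hzy : ¬s z y := fun h => hyz (s.symm' h)
      simp [g, hyz, hzy]
  have hinside : ∑ y ∈ Y, ∑ z ∈ Y, g y z = 0 := by
    have hanti : ∑ y ∈ Y, ∑ z ∈ Y, g y z = -∑ y ∈ Y, ∑ z ∈ Y, g y z := by
      rw [← sum_neg_distrib]
      nth_rewrite 1 [sum_comm]
      refine sum_congr rfl fun y _ => ?_
      rw [← sum_neg_distrib]
      exact sum_congr rfl fun z _ => hg y z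
    linarith
  have houtside : 0 ≤ ∑ y ∈ Y, ∑ z ∈ Yᶜ, g y z := by
    refine sum_nonneg fun y hy => sum_nonneg fun z hz => ?_
    by_cases hyz : s y z
    · simp only [g, hyz, if_true]
      exact div_nonneg (sub_nonneg.2 (h y hy z (mem_compl.1 hz) hyz)) (card_classOf_pos y).le
    · simp [g, hyz]
  have hsplit : ∑ y ∈ Y, (classAverage s w y - w y) =
      ∑ y ∈ Y, ∑ z ∈ Y, g y z + ∑ y ∈ Y, ∑ z ∈ Yᶜ, g y z := by
    rw [← sum_add_distrib]
    exact sum_congr rfl fun y _ => by rw [sum_add_sum_compl, classAverage_sub_eq_sum]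
  rw [sum_sub_distrib] at hsplit
  linarith

theorem exists_classProfile_eq_sum_le (w : ι → ℝ) (X : Finset ι) :
    ∃ Y, classProfile s Y = classProfile s X ∧ ∑ i ∈ Y, w i ≤ ∑ i ∈ X, classAverage s w i := by
  obtain ⟨Y, hY, hmin⟩ :=
    exists_min_image (univ.filter fun Y => classProfile s Y = classProfile s X)
      (fun Y => ∑ i ∈ Y, w i) ⟨X, by simp⟩
  rw [mem_filter] at hY
  refine ⟨Y, hY.2, ?_⟩
  calc ∑ i ∈ Y, w i ≤ ∑ i ∈ Y, classAverage s w i := sum_le_sum_classAverage fun y hy z hz hyz => by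
        have hexchange := hmin (insert z (Y.erase y))
          (by simp [classProfile_insert_erase hy hz hyz, hY.2])
        rw [sum_insert (fun h => hz (mem_of_mem_erase h)), sum_erase_eq_sub hy] at hexchange
        linarith
    _ = ∑ i ∈ X, classAverage s w i :=
        sum_eq_sum_of_classProfile_eq (fun _ _ => classAverage_eq_of_rel w) hY.2

theorem exists_classProfile_eq_le_sum (w : ι → ℝ) (X : Finset ι) :
    ∃ Y, classProfile s Y = classProfile s X ∧ ∑ i ∈ X, classAverage s w i ≤ ∑ i ∈ Y, w i := by
  obtain ⟨Y, hYX, hY⟩ := exists_classProfile_eq_sum_le (s := s) (fun i => -w i) X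
  simp only [classAverage_neg, sum_neg_distrib, neg_le_neg_iff] at hY
  exact ⟨Y, hYX, hY⟩

end ClassAverage

theorem stmt_13_general {ι : Type*} [Fintype ι] [DecidableEq ι] (W : Set (Finset ι))
    (w : ι → ℝ) (q : ℝ) (hw : ∀ i, 0 ≤ w i)
    (hnz : ¬(q = 0 ∧ ∀ i, w i = 0))
    (hrep : ∀ X : Finset ι, ((∑ i ∈ X, w i) < q → X ∉ W) ∧ (q < (∑ i ∈ X, w i) → X ∈ W))
    (r : ι → ι → Prop)
    (hr : ∀ i j, r i j ↔ ∀ X : Finset ι, i ∉ X → j ∉ X → (insert i X ∈ W ↔ insert j X ∈ W))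
    (cls : ι → Finset ι) (hcls : ∀ i, cls i = Finset.univ.filter (fun j => r i j))
    (u : ι → ℝ) (hu : ∀ i, u i = (∑ j ∈ cls i, w j) / (cls i).card) :
    (∀ i, 0 ≤ u i) ∧ ¬(q = 0 ∧ ∀ i, u i = 0) ∧
    (∀ X : Finset ι, ((∑ i ∈ X, u i) < q → X ∉ W) ∧ (q < (∑ i ∈ X, u i) → X ∈ W)) ∧
    (∀ i j, r i j → u i = u j) := by
  obtain rfl : r = Interchangeable W := funext₂ fun i j => propext (hr i j)
  obtain rfl : u = classAverage (interchangeableSetoid W) w :=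
    funext fun i => by rw [hu, hcls]; rfl
  have hprofile {X Y : Finset ι} (h : classProfile (interchangeableSetoid W) X =
      classProfile (interchangeableSetoid W) Y) : X ∈ W ↔ Y ∈ W :=
    mem_iff_of_classProfile_eq (fun _ _ => id) h
  refine ⟨classAverage_nonneg hw,
    fun ⟨hq, hu0⟩ => hnz ⟨hq, fun i => eq_zero_of_classAverage_eq_zero hw (hu0 i)⟩,
    fun X => ⟨fun hlt hX => ?_, fun hgt => ?_⟩,
    fun _ _ h => classAverage_eq_of_rel (s := interchangeableSetoid W) w h⟩
  · obtain ⟨Y, hYX, hY⟩ := exists_classProfile_eq_sum_le w X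
    exact (hrep Y).1 (hY.trans_lt hlt) ((hprofile hYX).2 hX)
  · obtain ⟨Y, hYX, hY⟩ := exists_classProfile_eq_le_sum w X
    exact (hprofile hYX).1 ((hrep Y).2 (hgt.trans_le hY))

theorem stmt_13 {ι : Type*} [Fintype ι] [DecidableEq ι] (W : Set (Finset ι))
    (hmono : ∀ X Y : Finset ι, X ∈ W → X ⊆ Y → Y ∈ W)
    (w : ι → ℝ) (q : ℝ) (hw : ∀ i, 0 ≤ w i)
    (hnz : ¬(q = 0 ∧ ∀ i, w i = 0))
    (hrep : ∀ X : Finset ι, ((∑ i ∈ X, w i) < q → X ∉ W) ∧ (q < (∑ i ∈ X, w i) → X ∈ W))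
    (r : ι → ι → Prop)
    (hr : ∀ i j, r i j ↔ ∀ X : Finset ι, i ∉ X → j ∉ X → (insert i X ∈ W ↔ insert j X ∈ W))
    (cls : ι → Finset ι) (hcls : ∀ i, cls i = Finset.univ.filter (fun j => r i j))
    (u : ι → ℝ) (hu : ∀ i, u i = (∑ j ∈ cls i, w j) / (cls i).card) :
    (∀ i, 0 ≤ u i) ∧ ¬(q = 0 ∧ ∀ i, u i = 0) ∧
    (∀ X : Finset ι, ((∑ i ∈ X, u i) < q → X ∉ W) ∧ (q < (∑ i ∈ X, u i) → X ∈ W)) ∧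
    (∀ i j, r i j → u i = u j) :=
  stmt_13_general W w q hw hnz hrep r hr cls hcls u hu
end
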